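/- arXiv:2602.18331 — 2 statements merged into one kernel-verified Lean document; each statement's English description precedes it below -/
import Mathlib

section
/- Let H be a symmetric positive definite n×n real matrix and let h : R^m → R^n be a map. For each parameter p, let z*(p) denote the unique minimizer of (1/2)z^T H z + h(p)^T z over the box [-1,1]^n. If h is Lipschitz continuous with constant L_h (with respect to Euclidean norms), then the solution map p ↦ z*(p) is Lipschitz continuous with constant L_h / λ_min(H), where λ_min(H) is the smallest eigenvalue of H. -/
open Matrix

/-- Euclidean norm of a finite real vector. -/
noncomputable def euclEnorm {ι : Type*} [Fintype ι] (x : ι → ℝ) : ℝ :=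
  Real.sqrt (∑ i, x i ^ 2)

/-!
A minimizer `u` of `q_c(z) = ½ zᵀHz + cᵀz` over a convex set `S` satisfies the variational
inequality `(Hu + c)ᵀ(y - u) ≥ 0` for all `y ∈ S`. Adding the inequalities for the minimizers
`u` of `q_a` and `v` of `q_b`, each tested at the other, gives
`(u - v)ᵀH(u - v) ≤ (b - a)ᵀ(u - v)`. The left side is at least `λ_min ‖u - v‖²` and the right
side at most `‖a - b‖ ‖u - v‖`, so `λ_min ‖u - v‖ ≤ ‖a - b‖`; with `a = h p`, `b = h q` the
Lipschitz bound on `h` finishes.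
-/

open Filter Topology

section EuclideanNorm

variable {ι : Type*} [Fintype ι]

lemma euclEnorm_eq_norm_toLp (x : ι → ℝ) : euclEnorm x = ‖WithLp.toLp 2 x‖ := by
  simp [euclEnorm, EuclideanSpace.norm_eq]

lemma euclEnorm_nonneg (x : ι → ℝ) : 0 ≤ euclEnorm x :=
  Real.sqrt_nonneg _

lemma sq_euclEnorm (x : ι → ℝ) : euclEnorm x ^ 2 = x ⬝ᵥ x := by
  rw [euclEnorm, Real.sq_sqrt (Finset.sum_nonneg fun i _ => sq_nonneg _)]
  simp [dotProduct, sq]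

lemma euclEnorm_sub_comm (x y : ι → ℝ) : euclEnorm (x - y) = euclEnorm (y - x) := by
  simp only [euclEnorm_eq_norm_toLp, WithLp.toLp_sub, norm_sub_rev]

lemma dotProduct_le_euclEnorm_mul_euclEnorm (x y : ι → ℝ) :
    x ⬝ᵥ y ≤ euclEnorm x * euclEnorm y := by
  rw [euclEnorm_eq_norm_toLp, euclEnorm_eq_norm_toLp]
  convert real_inner_le_norm (WithLp.toLp 2 x) (WithLp.toLp 2 y) using 1
  simp [EuclideanSpace.inner_eq_star_dotProduct, dotProduct_comm]

end EuclideanNorm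

namespace Matrix.IsHermitian

variable {ι : Type*} [Fintype ι] [DecidableEq ι] {A : Matrix ι ι ℝ}

lemma eq_eigenvectorUnitary_mul_diagonal_mul_transpose (hA : A.IsHermitian) :
    A = (hA.eigenvectorUnitary : Matrix ι ι ℝ) * diagonal hA.eigenvalues *
      (hA.eigenvectorUnitary : Matrix ι ι ℝ)ᵀ := by
  conv_lhs => rw [hA.spectral_theorem]
  simp [Unitary.conjStarAlgAut_apply, star_eq_conjTranspose]

lemma dotProduct_mulVec_eq_sum_eigenvalues (hA : A.IsHermitian) (d : ι → ℝ) :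
    d ⬝ᵥ A *ᵥ d =
      ∑ i, hA.eigenvalues i * ((hA.eigenvectorUnitary : Matrix ι ι ℝ)ᵀ *ᵥ d) i ^ 2 := by
  conv_lhs => rw [eq_eigenvectorUnitary_mul_diagonal_mul_transpose hA]
  rw [← mulVec_mulVec, ← mulVec_mulVec, dotProduct_mulVec, ← mulVec_transpose]
  simp only [dotProduct, mulVec_diagonal, sq, mul_left_comm]

lemma dotProduct_self_eigenvectorUnitary_transpose_mulVec (hA : A.IsHermitian) (d : ι → ℝ) :
    ((hA.eigenvectorUnitary : Matrix ι ι ℝ)ᵀ *ᵥ d) ⬝ᵥ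
      ((hA.eigenvectorUnitary : Matrix ι ι ℝ)ᵀ *ᵥ d) = d ⬝ᵥ d := by
  have horth : (hA.eigenvectorUnitary : Matrix ι ι ℝ) * (hA.eigenvectorUnitary : Matrix ι ι ℝ)ᵀ =
      1 := by
    simpa [star_eq_conjTranspose] using Unitary.mul_star_self_of_mem hA.eigenvectorUnitary.2
  rw [dotProduct_mulVec, ← mulVec_transpose, transpose_transpose, mulVec_mulVec, horth, one_mulVec]

lemma inf'_eigenvalues_mul_dotProduct_self_le [Nonempty ι] (hA : A.IsHermitian) (d : ι → ℝ) :
    Finset.univ.inf' Finset.univ_nonempty hA.eigenvalues * (d ⬝ᵥ d) ≤ d ⬝ᵥ A *ᵥ d := by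
  rw [hA.dotProduct_mulVec_eq_sum_eigenvalues,
    ← hA.dotProduct_self_eigenvectorUnitary_transpose_mulVec, dotProduct, Finset.mul_sum]
  refine Finset.sum_le_sum fun i _ => ?_
  rw [← sq]
  exact mul_le_mul_of_nonneg_right (Finset.inf'_le _ (Finset.mem_univ i)) (sq_nonneg _)

end Matrix.IsHermitian

lemma nonneg_of_forall_add_mul_nonneg {G C : ℝ} (h : ∀ t : ℝ, 0 < t → t ≤ 1 → 0 ≤ G + t * C) :
    0 ≤ G := by
  have hlim : Tendsto (fun t => G + t * C) (𝓝[>] 0) (𝓝 G) := by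
    have : Continuous (fun t : ℝ => G + t * C) := by fun_prop
    simpa using (this.tendsto 0).mono_left nhdsWithin_le_nhds
  refine ge_of_tendsto hlim ?_
  filter_upwards [Ioc_mem_nhdsGT one_pos] with t ht using h t ht.1 ht.2

section Quadratic

variable {ι : Type*} [Fintype ι] {H : Matrix ι ι ℝ}

lemma Matrix.IsSymm.dotProduct_mulVec_eq_mulVec_dotProduct (hH : H.IsSymm) (u d : ι → ℝ) :
    u ⬝ᵥ H *ᵥ d = H *ᵥ u ⬝ᵥ d := by
  rw [dotProduct_mulVec, ← mulVec_transpose, hH.eq]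

lemma add_smul_dotProduct_mulVec_add_smul (hH : H.IsSymm) (u d : ι → ℝ) (t : ℝ) :
    (u + t • d) ⬝ᵥ H *ᵥ (u + t • d) =
      u ⬝ᵥ H *ᵥ u + 2 * t * (H *ᵥ u ⬝ᵥ d) + t ^ 2 * (d ⬝ᵥ H *ᵥ d) := by
  simp only [mulVec_add, mulVec_smul, dotProduct_add, add_dotProduct, dotProduct_smul,
    smul_dotProduct, smul_eq_mul, hH.dotProduct_mulVec_eq_mulVec_dotProduct u d,
    dotProduct_comm d (H *ᵥ u)]
  ring

lemma IsMinOn.mulVec_add_dotProduct_sub_nonneg {S : Set (ι → ℝ)} (hS : Convex ℝ S)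
    (hH : H.IsSymm) {c u v : ι → ℝ}
    (hmin : IsMinOn (fun z => (1/2) * (z ⬝ᵥ (H *ᵥ z)) + c ⬝ᵥ z) S u) (hu : u ∈ S) (hv : v ∈ S) :
    0 ≤ (H *ᵥ u + c) ⬝ᵥ (v - u) := by
  refine nonneg_of_forall_add_mul_nonneg (C := (1/2) * ((v - u) ⬝ᵥ H *ᵥ (v - u)))
    fun t ht0 ht1 => ?_
  have hle := isMinOn_iff.1 hmin _ (hS.add_smul_sub_mem hu hv ⟨ht0.le, ht1⟩)
  simp only [add_smul_dotProduct_mulVec_add_smul hH, dotProduct_add, dotProduct_smul,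
    smul_eq_mul] at hle
  refine nonneg_of_mul_nonneg_right (a := t) ?_ ht0
  rw [add_dotProduct]
  linarith

lemma dotProduct_mulVec_sub_le_of_variational {u v a b : ι → ℝ}
    (hu : 0 ≤ (H *ᵥ u + a) ⬝ᵥ (v - u)) (hv : 0 ≤ (H *ᵥ v + b) ⬝ᵥ (u - v)) :
    (u - v) ⬝ᵥ H *ᵥ (u - v) ≤ (b - a) ⬝ᵥ (u - v) := by
  rw [← neg_sub u v, dotProduct_neg] at hu
  rw [dotProduct_comm, mulVec_sub]
  simp only [add_dotProduct, sub_dotProduct] at hu hv ⊢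
  linarith

theorem inf'_eigenvalues_mul_euclEnorm_sub_le [DecidableEq ι] [Nonempty ι] {S : Set (ι → ℝ)}
    (hS : Convex ℝ S) (hH : H.IsHermitian) {a b u v : ι → ℝ}
    (hu : IsMinOn (fun z => (1/2) * (z ⬝ᵥ (H *ᵥ z)) + a ⬝ᵥ z) S u)
    (hv : IsMinOn (fun z => (1/2) * (z ⬝ᵥ (H *ᵥ z)) + b ⬝ᵥ z) S v) (huS : u ∈ S) (hvS : v ∈ S) :
    Finset.univ.inf' Finset.univ_nonempty hH.eigenvalues * euclEnorm (u - v) ≤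
      euclEnorm (a - b) := by
  have hsymm : H.IsSymm := isHermitian_iff_isSymm.1 hH
  have key : Finset.univ.inf' Finset.univ_nonempty hH.eigenvalues * euclEnorm (u - v) *
      euclEnorm (u - v) ≤ euclEnorm (a - b) * euclEnorm (u - v) :=
    calc _ = Finset.univ.inf' Finset.univ_nonempty hH.eigenvalues * ((u - v) ⬝ᵥ (u - v)) := by
          rw [mul_assoc, ← sq, sq_euclEnorm]
      _ ≤ (u - v) ⬝ᵥ H *ᵥ (u - v) := hH.inf'_eigenvalues_mul_dotProduct_self_le _
      _ ≤ (b - a) ⬝ᵥ (u - v) := dotProduct_mulVec_sub_le_of_variational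
          (hu.mulVec_add_dotProduct_sub_nonneg hS hsymm huS hvS)
          (hv.mulVec_add_dotProduct_sub_nonneg hS hsymm hvS huS)
      _ ≤ euclEnorm (b - a) * euclEnorm (u - v) := dotProduct_le_euclEnorm_mul_euclEnorm _ _
      _ = euclEnorm (a - b) * euclEnorm (u - v) := by rw [euclEnorm_sub_comm]
  rcases (euclEnorm_nonneg (u - v)).eq_or_lt with h0 | h0
  · rw [← h0, mul_zero]
    exact euclEnorm_nonneg _
  · exact le_of_mul_le_mul_right key h0

end Quadratic

theorem stmt_0 {n m : ℕ} [Nonempty (Fin n)]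
    (H : Matrix (Fin n) (Fin n) ℝ) (hH : H.PosDef)
    (h : (Fin m → ℝ) → (Fin n → ℝ)) (Lh : ℝ)
    (hLip : ∀ p q, euclEnorm (h p - h q) ≤ Lh * euclEnorm (p - q))
    (zs : (Fin m → ℝ) → (Fin n → ℝ))
    (hmem : ∀ p i, zs p i ∈ Set.Icc (-1 : ℝ) 1)
    (hopt : ∀ p z, (∀ i, z i ∈ Set.Icc (-1 : ℝ) 1) →
      (1/2) * (zs p ⬝ᵥ (H *ᵥ zs p)) + h p ⬝ᵥ zs p ≤
        (1/2) * (z ⬝ᵥ (H *ᵥ z)) + h p ⬝ᵥ z) :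
    ∀ p q, euclEnorm (zs p - zs q) ≤
      (Lh / (Finset.univ.inf' Finset.univ_nonempty hH.1.eigenvalues)) * euclEnorm (p - q) := by
  intro p q
  set box : Set (Fin n → ℝ) := Set.univ.pi fun _ => Set.Icc (-1) 1
  have hbox : Convex ℝ box := convex_pi fun _ _ => convex_Icc _ _
  have hmin : ∀ p, IsMinOn (fun z => (1/2) * (z ⬝ᵥ (H *ᵥ z)) + h p ⬝ᵥ z) box (zs p) :=
    fun p => isMinOn_iff.2 fun z hz => hopt p z (Set.mem_univ_pi.1 hz)
  have hpos : 0 < Finset.univ.inf' Finset.univ_nonempty hH.1.eigenvalues :=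
    (Finset.lt_inf'_iff _).2 fun i _ => hH.eigenvalues_pos i
  have key := inf'_eigenvalues_mul_euclEnorm_sub_le hbox hH.1 (hmin p) (hmin q)
    (Set.mem_univ_pi.2 (hmem p)) (Set.mem_univ_pi.2 (hmem q))
  rw [div_mul_eq_mul_div, le_div_iff₀ hpos, mul_comm]
  exact key.trans (hLip p q)
end

section
/- Let H be symmetric positive definite with smallest eigenvalue λ_min(H), let ψ : R^{n_x} → R^{n_ψ} be Lipschitz with constant L_ψ, and define h(x) = ρ[FᵀE; −E]ψ(x) − c. Let z*(x) be the unique minimizer of (1/2)zᵀHz + h(x)ᵀz over [-1,1]^n, and let u₀(x) = C z*(x) where C = [I_{n_u}, 0] selects the first n_u coordinates. Then u₀ is Lipschitz with constant ρ·sqrt(λ_max(Eᵀ(FFᵀ+I)E))·L_ψ / λ_min(H). -/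
/-!
Both `z*(x)` and `z*(y)` satisfy the variational inequality of their box-constrained QP. Adding
the two inequalities gives `dᵀ H d ≤ (h y - h x)ᵀ d` for `d = z*(x) - z*(y)`, so
`λ_min(H) ‖d‖ ≤ ‖h x - h y‖` by Rayleigh and Cauchy–Schwarz. Finally
`h x - h y = ρ A (ψ x - ψ y)` with `A = [Fᵀ E; -E]`, and `AᵀA = Eᵀ(FFᵀ + I)E` bounds `‖A‖₂`
by `√λ_max(Eᵀ(FFᵀ + I)E)`; the projection `C` does not increase the norm.
-/

open Matrix

/-- Euclidean norm of a finite real vector. -/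
noncomputable def euclidEnorm {ι : Type*} [Fintype ι] (x : ι → ℝ) : ℝ :=
  Real.sqrt (∑ i, x i ^ 2)

open Filter Topology Finset

section EuclidEnorm

variable {ι : Type*} [Fintype ι]

lemma euclidEnorm_nonneg (x : ι → ℝ) : 0 ≤ euclidEnorm x :=
  Real.sqrt_nonneg _

lemma euclidEnorm_sq (x : ι → ℝ) : euclidEnorm x ^ 2 = x ⬝ᵥ x := by
  rw [euclidEnorm, Real.sq_sqrt (sum_nonneg fun i _ => sq_nonneg _)]
  simp only [dotProduct, sq]

lemma euclidEnorm_smul (r : ℝ) (x : ι → ℝ) :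
    euclidEnorm (r • x) = |r| * euclidEnorm x := by
  simp only [euclidEnorm, Pi.smul_apply, smul_eq_mul, mul_pow, ← mul_sum,
    Real.sqrt_mul (sq_nonneg r), Real.sqrt_sq_eq_abs]

lemma euclidEnorm_sub_comm (x y : ι → ℝ) : euclidEnorm (x - y) = euclidEnorm (y - x) := by
  simp only [euclidEnorm, Pi.sub_apply]
  congr 1
  exact sum_congr rfl fun i _ => by ring

lemma dotProduct_le_euclidEnorm_mul (x y : ι → ℝ) :
    x ⬝ᵥ y ≤ euclidEnorm x * euclidEnorm y := by
  simpa [dotProduct, euclidEnorm] using Real.sum_mul_le_sqrt_mul_sqrt univ x y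

lemma euclidEnorm_comp_inl_le {κ : Type*} [Fintype κ] (x : ι ⊕ κ → ℝ) :
    euclidEnorm (x ∘ Sum.inl) ≤ euclidEnorm x := by
  refine Real.sqrt_le_sqrt ?_
  rw [Fintype.sum_sum_type]
  exact le_add_of_nonneg_right (sum_nonneg fun i _ => sq_nonneg _)

end EuclidEnorm

namespace Matrix.IsHermitian

variable {n : Type*} [Fintype n] {M : Matrix n n ℝ}

lemma dotProduct_mulVec_comm (hM : M.IsHermitian) (v w : n → ℝ) :
    v ⬝ᵥ (M *ᵥ w) = w ⬝ᵥ (M *ᵥ v) := by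
  have hMt : Mᵀ = M := by rw [← conjTranspose_eq_transpose_of_trivial]; exact hM
  rw [dotProduct_mulVec, ← mulVec_transpose, hMt, dotProduct_comm]

variable [DecidableEq n]

lemma dotProduct_mulVec_eq_sum_eigenvalues_s16 (hM : M.IsHermitian) (v : n → ℝ) :
    v ⬝ᵥ (M *ᵥ v) =
      ∑ i, hM.eigenvalues i * (star (hM.eigenvectorUnitary : Matrix n n ℝ) *ᵥ v) i ^ 2 := by
  conv_lhs => rw [hM.spectral_theorem, Unitary.conjStarAlgAut_apply]
  rw [← mulVec_mulVec, ← mulVec_mulVec, dotProduct_mulVec, ← mulVec_transpose,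
    ← conjTranspose_eq_transpose_of_trivial, ← star_eq_conjTranspose]
  simp only [dotProduct, mulVec_diagonal, Function.comp_apply, RCLike.ofReal_real_eq_id, id]
  exact sum_congr rfl fun i _ => by ring

lemma dotProduct_self_eq_sum_eigenvectorUnitary (hM : M.IsHermitian) (v : n → ℝ) :
    v ⬝ᵥ v = ∑ i, (star (hM.eigenvectorUnitary : Matrix n n ℝ) *ᵥ v) i ^ 2 := by
  set U : Matrix n n ℝ := (hM.eigenvectorUnitary : Matrix n n ℝ)
  have hUU : U * star U = 1 := Unitary.coe_mul_star_self hM.eigenvectorUnitary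
  calc v ⬝ᵥ v = v ⬝ᵥ ((U * star U) *ᵥ v) := by rw [hUU, one_mulVec]
    _ = _ := by
      rw [← mulVec_mulVec, dotProduct_mulVec, ← mulVec_transpose,
        ← conjTranspose_eq_transpose_of_trivial, ← star_eq_conjTranspose]
      simp only [dotProduct, sq]

variable [Nonempty n]

lemma dotProduct_mulVec_le_sup'_eigenvalues (hM : M.IsHermitian) (v : n → ℝ) :
    v ⬝ᵥ (M *ᵥ v) ≤ univ.sup' univ_nonempty hM.eigenvalues * (v ⬝ᵥ v) := by
  rw [hM.dotProduct_mulVec_eq_sum_eigenvalues_s16, hM.dotProduct_self_eq_sum_eigenvectorUnitary,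
    mul_sum]
  exact sum_le_sum fun i _ =>
    mul_le_mul_of_nonneg_right (le_sup' hM.eigenvalues (mem_univ i)) (sq_nonneg _)

lemma inf'_eigenvalues_mul_le_dotProduct_mulVec (hM : M.IsHermitian) (v : n → ℝ) :
    univ.inf' univ_nonempty hM.eigenvalues * (v ⬝ᵥ v) ≤ v ⬝ᵥ (M *ᵥ v) := by
  rw [hM.dotProduct_mulVec_eq_sum_eigenvalues_s16, hM.dotProduct_self_eq_sum_eigenvectorUnitary,
    mul_sum]
  exact sum_le_sum fun i _ =>
    mul_le_mul_of_nonneg_right (inf'_le hM.eigenvalues (mem_univ i)) (sq_nonneg _)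

end Matrix.IsHermitian

lemma euclidEnorm_mulVec_le {m n : Type*} [Fintype m] [Fintype n] [DecidableEq n] [Nonempty n]
    (A : Matrix m n ℝ) {M : Matrix n n ℝ} (hM : M.IsHermitian) (hAM : Aᵀ * A = M)
    (w : n → ℝ) :
    euclidEnorm (A *ᵥ w) ≤ √(univ.sup' univ_nonempty hM.eigenvalues) * euclidEnorm w := by
  rw [← Real.sqrt_sq (euclidEnorm_nonneg (A *ᵥ w)), ← Real.sqrt_sq (euclidEnorm_nonneg w),
    ← Real.sqrt_mul' _ (sq_nonneg _)]
  refine Real.sqrt_le_sqrt ?_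
  rw [euclidEnorm_sq, euclidEnorm_sq, dotProduct_mulVec, ← mulVec_transpose, mulVec_mulVec, hAM,
    dotProduct_comm]
  exact hM.dotProduct_mulVec_le_sup'_eigenvalues w

lemma fromRows_transpose_mul_self {k m p : Type*} [Fintype k] [Fintype m] [DecidableEq m]
    (E : Matrix m p ℝ) (F : Matrix m k ℝ) :
    (fromRows (Fᵀ * E) (-E))ᵀ * fromRows (Fᵀ * E) (-E) = Eᵀ * (F * Fᵀ + 1) * E := by
  rw [transpose_fromRows, fromCols_mul_fromRows]
  simp only [transpose_mul, transpose_transpose, transpose_neg, Matrix.neg_mul, Matrix.mul_neg,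
    neg_neg, Matrix.mul_add, Matrix.add_mul, Matrix.mul_one, Matrix.mul_assoc]

section QuadraticProgram

variable {n : Type*} [Fintype n] {H : Matrix n n ℝ}

noncomputable def quadraticObjective (H : Matrix n n ℝ) (q z : n → ℝ) : ℝ :=
  1 / 2 * (z ⬝ᵥ (H *ᵥ z)) + q ⬝ᵥ z

lemma quadraticObjective_add_smul (hH : H.IsHermitian) (q a v : n → ℝ) (t : ℝ) :
    quadraticObjective H q (a + t • v) =
      quadraticObjective H q a + t * ((H *ᵥ a + q) ⬝ᵥ v) +
        t ^ 2 * (v ⬝ᵥ (H *ᵥ v) / 2) := by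
  simp only [quadraticObjective, mulVec_add, mulVec_smul, dotProduct_add, add_dotProduct,
    dotProduct_smul, smul_dotProduct, smul_eq_mul, hH.dotProduct_mulVec_comm a v,
    dotProduct_comm (H *ᵥ a) v]
  ring

lemma nonneg_of_forall_mul_add_sq_mul_nonneg {A B : ℝ}
    (h : ∀ t ∈ Set.Ioc (0 : ℝ) 1, 0 ≤ t * A + t ^ 2 * B) : 0 ≤ A := by
  have hlim : Tendsto (fun t : ℝ => A + t * B) (𝓝[>] 0) (𝓝 A) := by
    refine tendsto_nhdsWithin_of_tendsto_nhds ?_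
    exact (by fun_prop : Continuous fun t : ℝ => A + t * B).tendsto' 0 A (by simp)
  refine ge_of_tendsto hlim ?_
  filter_upwards [Ioc_mem_nhdsGT one_pos] with t ht
  have hmul : 0 ≤ t * (A + t * B) := by linarith [h t ht]
  exact (mul_nonneg_iff_of_pos_left ht.1).mp hmul

lemma IsMinOn.quadraticObjective_grad_dotProduct_sub_nonneg (hH : H.IsHermitian) {q a z : n → ℝ}
    {S : Set (n → ℝ)} (hS : Convex ℝ S) (ha : a ∈ S)
    (hmin : IsMinOn (quadraticObjective H q) S a) (hz : z ∈ S) :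
    0 ≤ (H *ᵥ a + q) ⬝ᵥ (z - a) := by
  refine nonneg_of_forall_mul_add_sq_mul_nonneg
    (B := (z - a) ⬝ᵥ (H *ᵥ (z - a)) / 2) fun t ht => ?_
  have hle := isMinOn_iff.mp hmin _ (hS.add_smul_sub_mem ha hz (Set.Ioc_subset_Icc_self ht))
  rw [quadraticObjective_add_smul hH] at hle
  linarith

lemma dotProduct_mulVec_sub_le_of_isMinOn (hH : H.IsHermitian) {q r a b : n → ℝ}
    {S : Set (n → ℝ)} (hS : Convex ℝ S) (ha : a ∈ S) (hb : b ∈ S)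
    (hmina : IsMinOn (quadraticObjective H q) S a) (hminb : IsMinOn (quadraticObjective H r) S b) :
    (a - b) ⬝ᵥ (H *ᵥ (a - b)) ≤ (r - q) ⬝ᵥ (a - b) := by
  have hvia := hmina.quadraticObjective_grad_dotProduct_sub_nonneg hH hS ha hb
  have hvib := hminb.quadraticObjective_grad_dotProduct_sub_nonneg hH hS hb ha
  have hsum : (H *ᵥ a + q) ⬝ᵥ (b - a) + (H *ᵥ b + r) ⬝ᵥ (a - b) =
      (r - q) ⬝ᵥ (a - b) - (a - b) ⬝ᵥ (H *ᵥ (a - b)) := by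
    rw [← neg_sub a b, dotProduct_neg, mulVec_sub, dotProduct_comm (a - b)]
    simp only [add_dotProduct, sub_dotProduct]
    ring
  linarith

lemma inf'_eigenvalues_mul_euclidEnorm_sub_le_of_isMinOn [DecidableEq n] [Nonempty n]
    (hH : H.IsHermitian) {q r a b : n → ℝ} {S : Set (n → ℝ)} (hS : Convex ℝ S)
    (ha : a ∈ S) (hb : b ∈ S)
    (hmina : IsMinOn (quadraticObjective H q) S a) (hminb : IsMinOn (quadraticObjective H r) S b) :
    univ.inf' univ_nonempty hH.eigenvalues * euclidEnorm (a - b) ≤ euclidEnorm (q - r) := by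
  have hquad : univ.inf' univ_nonempty hH.eigenvalues * euclidEnorm (a - b) * euclidEnorm (a - b)
      ≤ euclidEnorm (q - r) * euclidEnorm (a - b) :=
    calc _ = univ.inf' univ_nonempty hH.eigenvalues * ((a - b) ⬝ᵥ (a - b)) := by
          rw [← euclidEnorm_sq]; ring
      _ ≤ (a - b) ⬝ᵥ (H *ᵥ (a - b)) := hH.inf'_eigenvalues_mul_le_dotProduct_mulVec _
      _ ≤ (r - q) ⬝ᵥ (a - b) := dotProduct_mulVec_sub_le_of_isMinOn hH hS ha hb hmina hminb
      _ ≤ euclidEnorm (r - q) * euclidEnorm (a - b) := dotProduct_le_euclidEnorm_mul _ _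
      _ = _ := by rw [euclidEnorm_sub_comm]
  rcases (euclidEnorm_nonneg (a - b)).eq_or_lt with hzero | hpos
  · rw [← hzero, mul_zero]
    exact euclidEnorm_nonneg _
  · exact le_of_mul_le_mul_right hquad hpos

end QuadraticProgram

theorem stmt_16 {nx nψ m k : ℕ} [Nonempty (Fin nψ)] [Nonempty (Fin k ⊕ Fin m)]
    (H : Matrix (Fin k ⊕ Fin m) (Fin k ⊕ Fin m) ℝ) (hH : H.PosDef)
    (ψ : (Fin nx → ℝ) → (Fin nψ → ℝ)) (Lψ : ℝ)
    (hψ : ∀ x y, euclidEnorm (ψ x - ψ y) ≤ Lψ * euclidEnorm (x - y))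
    (ρ : ℝ) (hρ : 0 < ρ)
    (E : Matrix (Fin m) (Fin nψ) ℝ) (F : Matrix (Fin m) (Fin k) ℝ)
    (c : Fin k ⊕ Fin m → ℝ)
    (hsym : (Eᵀ * (F * Fᵀ + 1) * E).IsHermitian)
    (zs : (Fin nx → ℝ) → (Fin k ⊕ Fin m → ℝ))
    (hmem : ∀ x i, zs x i ∈ Set.Icc (-1:ℝ) 1)
    (hopt : ∀ x z, (∀ i, z i ∈ Set.Icc (-1:ℝ) 1) →
      (1/2) * (zs x ⬝ᵥ (H *ᵥ zs x)) +
          (ρ • (Matrix.fromRows (Fᵀ * E) (-E) *ᵥ ψ x) - c) ⬝ᵥ zs x ≤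
        (1/2) * (z ⬝ᵥ (H *ᵥ z)) +
          (ρ • (Matrix.fromRows (Fᵀ * E) (-E) *ᵥ ψ x) - c) ⬝ᵥ z) :
    ∀ x y, euclidEnorm (fun i : Fin k => zs x (Sum.inl i) - zs y (Sum.inl i)) ≤
      ρ * Real.sqrt (Finset.univ.sup' Finset.univ_nonempty hsym.eigenvalues) * Lψ /
        (Finset.univ.inf' Finset.univ_nonempty hH.1.eigenvalues) * euclidEnorm (x - y) := by
  intro x y
  set A := fromRows (Fᵀ * E) (-E)
  set box : Set (Fin k ⊕ Fin m → ℝ) := Set.univ.pi fun _ => Set.Icc (-1) 1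
  have hinf_pos : 0 < univ.inf' univ_nonempty hH.1.eigenvalues :=
    (lt_inf'_iff _).mpr fun i _ => hH.eigenvalues_pos i
  have hmin (x) : IsMinOn (quadraticObjective H (ρ • (A *ᵥ ψ x) - c)) box (zs x) :=
    isMinOn_iff.mpr fun z hz => hopt x z (Set.mem_univ_pi.mp hz)
  have hqp := inf'_eigenvalues_mul_euclidEnorm_sub_le_of_isMinOn hH.1
    (convex_pi fun _ _ => convex_Icc _ _) (Set.mem_univ_pi.mpr (hmem x))
    (Set.mem_univ_pi.mpr (hmem y)) (hmin x) (hmin y)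
  have hlin : euclidEnorm ((ρ • (A *ᵥ ψ x) - c) - (ρ • (A *ᵥ ψ y) - c)) ≤
      ρ * √(univ.sup' univ_nonempty hsym.eigenvalues) * Lψ * euclidEnorm (x - y) :=
    calc _ = ρ * euclidEnorm (A *ᵥ (ψ x - ψ y)) := by
          rw [sub_sub_sub_cancel_right, ← smul_sub, ← mulVec_sub, euclidEnorm_smul,
            abs_of_pos hρ]
      _ ≤ ρ * (√(univ.sup' univ_nonempty hsym.eigenvalues) * (Lψ * euclidEnorm (x - y))) := by
          gcongr
          exact (euclidEnorm_mulVec_le A hsym (fromRows_transpose_mul_self E F) _).trans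
            (by gcongr; exact hψ x y)
      _ = _ := by ring
  calc euclidEnorm (fun i : Fin k => zs x (Sum.inl i) - zs y (Sum.inl i))
      ≤ euclidEnorm (zs x - zs y) := euclidEnorm_comp_inl_le (zs x - zs y)
    _ ≤ _ := by
      rw [div_mul_eq_mul_div, le_div_iff₀ hinf_pos]
      linarith
end
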